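/- Let S and T be d-by-d matrices over an algebraically closed field, both diagonalizable, with integer entries and totally irreducible (all powers have irreducible characteristic polynomial over ℚ). Let 𝓘 be the collection of nonzero subspaces of (the algebraic closure of ℚ)^d that are simultaneously invariant under S and T, and suppose 𝓘 is nonempty. Let p be the minimal dimension of a member of 𝓘. Then p divides d, and the dimension of every member of 𝓘 is divisible by p. -/

import Mathlib

/-!
Sums and intersections of common invariant subspaces are again common invariant subspaces, and
the Galois conjugates `σ W₀` of a minimal one `W₀` are common invariant subspaces of the same
dimension `p`. Their sum is Galois-stable and `S`-invariant; a Galois-stable subspace contains a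
nonzero rational vector, so the sum contains a nonzero `S`-invariant rational subspace, which is
everything because the characteristic polynomial of `S` is irreducible over `ℚ`. Now add the
conjugates one at a time to a common invariant subspace `W`: by minimality each one either lies in
the current sum or meets it trivially, so the dimension grows by `0` or `p`, and the process ends
at the whole space. Hence `d ≡ dim W [MOD p]` for every such `W`, including `W = 0`.
-/

open Module Matrix Finset Polynomial

namespace Module.End

variable {F V : Type*} [Field F] [AddCommGroup V] [Module F V]

theorem aeval_restrict_apply (f : End F V) {U : Submodule F V} (hU : ∀ x ∈ U, f x ∈ U)
    (p : F[X]) (x : U) : (aeval (f.restrict hU) p x : V) = aeval f p x := by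
  induction p using Polynomial.induction_on' with
  | add p q hp hq => simp [hp, hq]
  | monomial n a => simp [pow_restrict n hU, LinearMap.restrict_apply]

variable [FiniteDimensional F V]

theorem eq_top_of_irreducible_charpoly {f : End F V} (hf : Irreducible f.charpoly)
    {U : Submodule F V} (hU : U ∈ f.invtSubmodule) (hU0 : U ≠ ⊥) : U = ⊤ := by
  have : Nontrivial U := Submodule.nontrivial_iff_ne_bot.mpr hU0
  replace hU : ∀ x ∈ U, f x ∈ U := hU
  set g := f.restrict hU with hg
  have hdvd : minpoly F g ∣ f.charpoly := minpoly.dvd F g <| LinearMap.ext fun x ↦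
    Subtype.ext <| by
      rw [LinearMap.zero_apply, ZeroMemClass.coe_zero, hg, aeval_restrict_apply,
        LinearMap.aeval_self_charpoly, LinearMap.zero_apply]
  have hassoc : Associated (minpoly F g) f.charpoly :=
    ((hf.dvd_iff.mp hdvd).resolve_left (minpoly.not_isUnit F g)).symm
  have hdeg : finrank F V ≤ finrank F U := calc
    finrank F V = f.charpoly.natDegree := f.charpoly_natDegree.symm
    _ = (minpoly F g).natDegree :=
      (natDegree_eq_of_degree_eq (degree_eq_degree_of_associated hassoc)).symm
    _ ≤ g.charpoly.natDegree :=
      natDegree_le_of_dvd (LinearMap.minpoly_dvd_charpoly g) g.charpoly_monic.ne_zero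
    _ = finrank F U := g.charpoly_natDegree
  exact Submodule.eq_top_of_finrank_eq (le_antisymm (Submodule.finrank_le U) hdeg)

end Module.End

namespace Sublattice

variable {K V : Type*} [DivisionRing K] [AddCommGroup V] [Module K V] [FiniteDimensional K V]
  {𝓛 : Sublattice (Submodule K V)} {p : ℕ}

theorem finrank_sup_modEq (hmin : ∀ W ∈ 𝓛, W ≠ ⊥ → p ≤ finrank K W) {U X : Submodule K V}
    (hU : U ∈ 𝓛) (hX : X ∈ 𝓛) (hXp : finrank K X = p) :
    finrank K ↥(U ⊔ X) ≡ finrank K U [MOD p] := by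
  by_cases hUX : U ⊓ X = ⊥
  · have := Submodule.finrank_sup_add_finrank_inf_eq U X
    rw [hUX, finrank_bot, hXp, add_zero] at this
    rw [this]
    exact Nat.add_modEq_right
  · have hXU : U ⊓ X = X := Submodule.eq_of_le_of_finrank_le inf_le_right
      (hXp ▸ hmin _ (𝓛.inf_mem hU hX) hUX)
    rw [sup_eq_left.mpr (inf_eq_right.mp hXU)]

theorem finrank_sup_iSup_modEq (hmin : ∀ W ∈ 𝓛, W ≠ ⊥ → p ≤ finrank K W) {ι : Type*}
    {X : ι → Submodule K V} (hX : ∀ i, X i ∈ 𝓛) (hXp : ∀ i, finrank K (X i) = p)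
    {U : Submodule K V} (hU : U ∈ 𝓛) :
    finrank K ↥(U ⊔ ⨆ i, X i) ≡ finrank K U [MOD p] := by
  classical
  obtain ⟨s, hs⟩ := CompleteLattice.IsCompactElement.exists_finset_of_le_iSup _
    ((Submodule.fg_iff_compact _).mp (IsNoetherian.noetherian (⨆ i, X i))) X le_rfl
  rw [le_antisymm hs (iSup₂_le_iSup _ X)]
  suffices ∀ s : Finset ι, U ⊔ ⨆ i ∈ s, X i ∈ 𝓛 ∧
      finrank K ↥(U ⊔ ⨆ i ∈ s, X i) ≡ finrank K U [MOD p] from (this s).2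
  intro s
  induction s using Finset.induction_on with
  | empty =>
    rw [show ⨆ i ∈ (∅ : Finset ι), X i = ⊥ by simp, sup_bot_eq]
    exact ⟨hU, rfl⟩
  | insert a s _ ih =>
    rw [Finset.iSup_insert, sup_left_comm, sup_comm]
    exact ⟨𝓛.sup_mem ih.1 (hX a), (finrank_sup_modEq hmin ih.1 (hX a) (hXp a)).trans ih.2⟩

end Sublattice

section GaloisConj

variable {F L : Type*} [Field F] [Field L] [Algebra F L] {ι : Type*}

def galoisConj (σ : L ≃ₐ[F] L) : (ι → L) →ₛₗ[((σ : L ≃+* L) : L →+* L)] (ι → L) where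
  toFun v i := σ (v i)
  map_add' v w := by ext; simp
  map_smul' c v := by ext; simp

theorem galoisConj_apply (σ : L ≃ₐ[F] L) (v : ι → L) (i : ι) : galoisConj σ v i = σ (v i) := rfl

theorem galoisConj_injective (σ : L ≃ₐ[F] L) : Function.Injective (galoisConj (ι := ι) σ) :=
  fun _ _ h ↦ funext fun i ↦ σ.injective (congrFun h i)

theorem finrank_map_galoisConj (σ : L ≃ₐ[F] L) (W : Submodule L (ι → L)) :
    finrank L (W.map (galoisConj σ)) = finrank L W := by
  have := RingHomInvPair.of_ringEquiv (σ : L ≃+* L)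
  have := RingHomInvPair.symm ((σ : L ≃+* L) : L →+* L) ((σ : L ≃+* L).symm : L →+* L)
  set e := W.equivMapOfInjective _ (galoisConj_injective σ)
  exact congrArg Cardinal.toNat
    (rank_eq_of_equiv_equiv σ e.toAddEquiv σ.bijective (map_smulₛₗ e)).symm

theorem map_galoisConj_map_galoisConj (σ τ : L ≃ₐ[F] L) (W : Submodule L (ι → L)) :
    (W.map (galoisConj σ)).map (galoisConj τ) = W.map (galoisConj (σ.trans τ)) :=
  SetLike.coe_injective <| by simp only [Submodule.map_coe, Set.image_image]; rfl

theorem galoisConj_mulVec [Fintype ι] (σ : L ≃ₐ[F] L) (A : Matrix ι ι F) (v : ι → L) :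
    galoisConj σ (A.map (algebraMap F L) *ᵥ v) = A.map (algebraMap F L) *ᵥ galoisConj σ v := by
  ext i
  simp only [galoisConj_apply, mulVec, dotProduct, map_sum, map_mul, map_apply, AlgEquiv.commutes]

theorem map_galoisConj_mem_invtSubmodule [Fintype ι] [DecidableEq ι] (σ : L ≃ₐ[F] L)
    {A : Matrix ι ι F} {W : Submodule L (ι → L)}
    (hW : W ∈ End.invtSubmodule (toLin' (A.map (algebraMap F L)))) :
    W.map (galoisConj σ) ∈ End.invtSubmodule (toLin' (A.map (algebraMap F L))) := by
  rintro _ ⟨v, hv, rfl⟩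
  exact ⟨_, hW hv, galoisConj_mulVec σ A v⟩

variable (F) in
def galoisHull (W : Submodule L (ι → L)) : Submodule L (ι → L) :=
  ⨆ σ : L ≃ₐ[F] L, W.map (galoisConj σ)

theorem le_galoisHull (W : Submodule L (ι → L)) : W ≤ galoisHull F W :=
  fun v hv ↦ Submodule.mem_iSup_of_mem AlgEquiv.refl ⟨v, hv, rfl⟩

theorem galoisConj_mem_galoisHull (τ : L ≃ₐ[F] L) {W : Submodule L (ι → L)} {v : ι → L}
    (hv : v ∈ galoisHull F W) : galoisConj τ v ∈ galoisHull F W := by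
  have : (galoisHull F W).map (galoisConj τ) ≤ galoisHull F W := by
    rw [galoisHull, Submodule.map_iSup]
    exact iSup_le fun σ ↦ map_galoisConj_map_galoisConj σ τ W ▸
      le_iSup (fun σ : L ≃ₐ[F] L ↦ W.map (galoisConj σ)) (σ.trans τ)
  exact this ⟨v, hv, rfl⟩

theorem galoisHull_mem_invtSubmodule [Fintype ι] [DecidableEq ι]
    {A : Matrix ι ι F} {W : Submodule L (ι → L)}
    (hW : W ∈ End.invtSubmodule (toLin' (A.map (algebraMap F L)))) :
    galoisHull F W ∈ End.invtSubmodule (toLin' (A.map (algebraMap F L))) := by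
  rw [End.mem_invtSubmodule_iff_map_le, galoisHull, Submodule.map_iSup]
  exact iSup_mono fun σ ↦
    (End.mem_invtSubmodule_iff_map_le _).mp (map_galoisConj_mem_invtSubmodule σ hW)

open scoped Classical in
theorem card_support_galoisConj_sub_lt [Fintype ι] (σ : L ≃ₐ[F] L)
    {u : ι → L} {i₀ : ι} (hu : u i₀ = 1) :
    #{i | (galoisConj σ u - u) i ≠ 0} < #{i | u i ≠ 0} := by
  refine Finset.card_lt_card (Finset.ssubset_iff_of_subset ?_ |>.mpr ⟨i₀, ?_, ?_⟩)
  · intro i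
    simp only [Finset.mem_filter, Finset.mem_univ, true_and]
    contrapose!
    intro hi
    simp only [Pi.sub_apply, galoisConj_apply, hi, map_zero, sub_zero]
  · simp [hu]
  · rw [Finset.mem_filter, Pi.sub_apply, galoisConj_apply, hu, map_one, sub_self]
    exact fun h ↦ h.2 rfl

theorem exists_ne_zero_forall_galoisConj_eq [Fintype ι] {W : Submodule L (ι → L)}
    (hW : ∀ σ : L ≃ₐ[F] L, ∀ v ∈ W, galoisConj σ v ∈ W) (hW0 : W ≠ ⊥) :
    ∃ v ∈ W, v ≠ 0 ∧ ∀ σ : L ≃ₐ[F] L, galoisConj σ v = v := by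
  classical
  obtain ⟨v, hv, hv0⟩ := Submodule.exists_mem_ne_zero_of_ne_bot hW0
  induction hn : #{i | v i ≠ 0} using Nat.strong_induction_on generalizing v with
  | _ n ih =>
    obtain ⟨i₀, hi₀⟩ : ∃ i, v i ≠ 0 := Function.ne_iff.mp hv0
    set u := (v i₀)⁻¹ • v
    have huW : u ∈ W := W.smul_mem _ hv
    have hu : u i₀ = 1 := inv_mul_cancel₀ hi₀
    have hsupp : #{i | u i ≠ 0} = n := by
      simpa [u, hi₀] using hn
    by_cases hfix : ∀ σ : L ≃ₐ[F] L, galoisConj σ u = u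
    · exact ⟨u, huW, smul_ne_zero (inv_ne_zero hi₀) hv0, hfix⟩
    push Not at hfix
    obtain ⟨σ, hσ⟩ := hfix
    exact ih _ (hsupp ▸ card_support_galoisConj_sub_lt σ hu) _
      (W.sub_mem (hW σ u huW) huW) (sub_ne_zero.mpr hσ) rfl

theorem exists_ne_zero_algebraMap_comp_mem [IsGalois F L] [Fintype ι] {W : Submodule L (ι → L)}
    (hW : ∀ σ : L ≃ₐ[F] L, ∀ v ∈ W, galoisConj σ v ∈ W) (hW0 : W ≠ ⊥) :
    ∃ q : ι → F, q ≠ 0 ∧ algebraMap F L ∘ q ∈ W := by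
  obtain ⟨v, hv, hv0, hfix⟩ := exists_ne_zero_forall_galoisConj_eq hW hW0
  choose q hq using fun i ↦ (InfiniteGalois.mem_range_algebraMap_iff_fixed (v i)).mpr
    fun σ ↦ congrFun (hfix σ) i
  have hqv : algebraMap F L ∘ q = v := funext hq
  refine ⟨q, fun h ↦ hv0 ?_, hqv ▸ hv⟩
  rw [← hqv, h]
  ext
  simp

theorem algebraMap_comp_mulVec [Fintype ι] (A : Matrix ι ι F) (q : ι → F) :
    algebraMap F L ∘ (A *ᵥ q) = A.map (algebraMap F L) *ᵥ (algebraMap F L ∘ q) :=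
  funext (RingHom.map_mulVec _ A q)

theorem eq_top_of_galoisConj_mem [IsGalois F L] [Fintype ι] [DecidableEq ι] {A : Matrix ι ι F}
    (hA : Irreducible A.charpoly) {W : Submodule L (ι → L)}
    (hW : ∀ σ : L ≃ₐ[F] L, ∀ v ∈ W, galoisConj σ v ∈ W)
    (hAW : W ∈ End.invtSubmodule (toLin' (A.map (algebraMap F L)))) (hW0 : W ≠ ⊥) :
    W = ⊤ := by
  obtain ⟨q, hq0, hq⟩ := exists_ne_zero_algebraMap_comp_mem hW hW0
  set U := (W.restrictScalars F).comap (LinearMap.compLeft (Algebra.linearMap F L) ι)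
  have hAU : U ∈ End.invtSubmodule (toLin' A) := fun x hx ↦ by
    show algebraMap F L ∘ (A *ᵥ x) ∈ W
    rw [algebraMap_comp_mulVec]
    exact hAW hx
  have hU : U = ⊤ := End.eq_top_of_irreducible_charpoly (by rwa [charpoly_toLin']) hAU
    ((Submodule.ne_bot_iff U).mpr ⟨q, hq, hq0⟩)
  rw [eq_top_iff, ← (Pi.basisFun L ι).span_eq, Submodule.span_le]
  rintro _ ⟨i, rfl⟩
  have hi : algebraMap F L ∘ Pi.single i 1 ∈ W := (hU ▸ Submodule.mem_top : Pi.single i 1 ∈ U)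
  rw [Pi.basisFun_apply, SetLike.mem_coe]
  convert hi using 1
  ext j
  by_cases h : j = i <;> simp [h]

end GaloisConj

-- Instance search finds `DivisionRing.toRatAlgebra` for `Algebra ℚ (AlgebraicClosure ℚ)`, which
-- is not reducibly defeq to the algebra structure `AlgebraicClosure.instIsAlgClosure` is about.
instance : IsAlgClosure ℚ (AlgebraicClosure ℚ) := AlgebraicClosure.instIsAlgClosure ℚ

theorem common_invariant_subspace_dimension_divisibility_general
    (d : ℕ) (S T : Matrix (Fin d) (Fin d) ℤ)
    (hSirr : ∀ n : ℕ, 0 < n → Irreducible (((S ^ n).map (Int.cast : ℤ → ℚ)).charpoly))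
    (I : Set (Submodule (AlgebraicClosure ℚ) (Fin d → AlgebraicClosure ℚ)))
    (hI : I = {W | W ≠ ⊥ ∧
      (∀ v ∈ W, (S.map (Int.cast : ℤ → AlgebraicClosure ℚ)).mulVec v ∈ W) ∧
      (∀ v ∈ W, (T.map (Int.cast : ℤ → AlgebraicClosure ℚ)).mulVec v ∈ W)})
    (p : ℕ) (W₀ : Submodule (AlgebraicClosure ℚ) (Fin d → AlgebraicClosure ℚ))
    (hW₀ : W₀ ∈ I) (hp : Module.finrank (AlgebraicClosure ℚ) W₀ = p)
    (hmin : ∀ W ∈ I, p ≤ Module.finrank (AlgebraicClosure ℚ) W) :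
    p ∣ d ∧ ∀ W ∈ I, p ∣ Module.finrank (AlgebraicClosure ℚ) W := by
  have hcast (A : Matrix (Fin d) (Fin d) ℤ) : A.map (Int.cast : ℤ → AlgebraicClosure ℚ) =
      (A.map (Int.cast : ℤ → ℚ)).map (algebraMap ℚ (AlgebraicClosure ℚ)) := by
    rw [Matrix.map_map]
    simp
  set 𝓛 := End.invtSubmodule (toLin' (S.map (Int.cast : ℤ → AlgebraicClosure ℚ))) ⊓
    End.invtSubmodule (toLin' (T.map (Int.cast : ℤ → AlgebraicClosure ℚ)))
  replace hI : I = {W | W ≠ ⊥ ∧ W ∈ 𝓛} := hI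
  subst hI
  obtain ⟨hW₀0, hW₀S, hW₀T⟩ := hW₀
  rw [hcast S] at hW₀S
  rw [hcast T] at hW₀T
  have hconj (σ : AlgebraicClosure ℚ ≃ₐ[ℚ] AlgebraicClosure ℚ) : W₀.map (galoisConj σ) ∈ 𝓛 :=
    ⟨hcast S ▸ map_galoisConj_mem_invtSubmodule σ hW₀S,
      hcast T ▸ map_galoisConj_mem_invtSubmodule σ hW₀T⟩
  have htop : galoisHull ℚ W₀ = ⊤ :=
    eq_top_of_galoisConj_mem (by simpa using hSirr 1 one_pos)
      (fun σ _ ↦ galoisConj_mem_galoisHull σ) (galoisHull_mem_invtSubmodule hW₀S)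
      (ne_bot_of_le_ne_bot hW₀0 (le_galoisHull W₀))
  have hmod (U) (hU : U ∈ 𝓛) : d ≡ finrank (AlgebraicClosure ℚ) U [MOD p] := by
    have := Sublattice.finrank_sup_iSup_modEq (fun W hW hW0 ↦ hmin W ⟨hW0, hW⟩) hconj
      (fun σ ↦ (finrank_map_galoisConj σ W₀).trans hp) hU
    rwa [← galoisHull, htop, sup_top_eq, finrank_top, finrank_fin_fun] at this
  have hbot : ⊥ ∈ 𝓛 := ⟨End.invtSubmodule.bot_mem _, End.invtSubmodule.bot_mem _⟩
  have hd : p ∣ d := Nat.modEq_zero_iff_dvd.mp (by simpa using hmod ⊥ hbot)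
  exact ⟨hd, fun W hW ↦ ((hmod W hW.2).dvd_iff dvd_rfl).mp hd⟩

/-- For two totally irreducible, diagonalizable integer matrices `S, T`,
the minimal dimension `p` of a nonzero common invariant subspace of `(ℚ̄)^d` divides `d`,
and divides the dimension of every common invariant subspace. -/
theorem common_invariant_subspace_dimension_divisibility
    (d : ℕ) (S T : Matrix (Fin d) (Fin d) ℤ)
    (hSirr : ∀ n : ℕ, 0 < n → Irreducible (((S ^ n).map (Int.cast : ℤ → ℚ)).charpoly))
    (hTirr : ∀ n : ℕ, 0 < n → Irreducible (((T ^ n).map (Int.cast : ℤ → ℚ)).charpoly))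
    (hSdiag : ∃ (P : Matrix (Fin d) (Fin d) (AlgebraicClosure ℚ)) (g : Fin d → AlgebraicClosure ℚ),
      IsUnit P.det ∧ S.map (Int.cast : ℤ → AlgebraicClosure ℚ) = P * Matrix.diagonal g * P⁻¹)
    (hTdiag : ∃ (P : Matrix (Fin d) (Fin d) (AlgebraicClosure ℚ)) (g : Fin d → AlgebraicClosure ℚ),
      IsUnit P.det ∧ T.map (Int.cast : ℤ → AlgebraicClosure ℚ) = P * Matrix.diagonal g * P⁻¹)
    (I : Set (Submodule (AlgebraicClosure ℚ) (Fin d → AlgebraicClosure ℚ)))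
    (hI : I = {W | W ≠ ⊥ ∧
      (∀ v ∈ W, (S.map (Int.cast : ℤ → AlgebraicClosure ℚ)).mulVec v ∈ W) ∧
      (∀ v ∈ W, (T.map (Int.cast : ℤ → AlgebraicClosure ℚ)).mulVec v ∈ W)})
    (p : ℕ) (W₀ : Submodule (AlgebraicClosure ℚ) (Fin d → AlgebraicClosure ℚ))
    (hW₀ : W₀ ∈ I) (hp : Module.finrank (AlgebraicClosure ℚ) W₀ = p)
    (hmin : ∀ W ∈ I, p ≤ Module.finrank (AlgebraicClosure ℚ) W) :
    p ∣ d ∧ ∀ W ∈ I, p ∣ Module.finrank (AlgebraicClosure ℚ) W :=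
  common_invariant_subspace_dimension_divisibility_general d S T hSirr I hI p W₀ hW₀ hp hmin
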